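/- arXiv:1712.05020 — 2 statements merged into one kernel-verified Lean document; each statement's English description precedes it below -/
import Mathlib

section
/- For every natural number h: if k is a real number with 2 ≤ k ≤ b − 2, then D̄(h, k) < D̄(h+1, k); and if k is a real number with k ≥ b − 1, then D̄(h+1, k) < D̄(h, k). -/
/-- `α = b + √(b² − 4b)`. -/
noncomputable def alpha (b : ℝ) : ℝ := b + Real.sqrt (b ^ 2 - 4 * b)

/-- `γ = b − √(b² − 4b)`. -/
noncomputable def gamma (b : ℝ) : ℝ := b - Real.sqrt (b ^ 2 - 4 * b)

/-- The recurrence `d(0,k) = k`, `d(1,k) = k·b − b`, `d(δ,k) = b·(d(δ−1,k) − d(δ−2,k))`. -/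
noncomputable def d (b k : ℝ) : ℕ → ℝ
  | 0 => k
  | 1 => k * b - b
  | (δ + 2) => b * (d b k (δ + 1) - d b k δ)

/-- `D(h,k) = Σ_{δ=0}^{h} d(δ,k)`. -/
noncomputable def D (b k : ℝ) (h : ℕ) : ℝ := ∑ δ ∈ Finset.range (h + 1), d b k δ

/-- Depthwise average degree: `d̄(0,k) = k`, `d̄(δ,k) = d(δ,k)/d(δ−1,k)` for `δ ≥ 1`. -/
noncomputable def dbar (b k : ℝ) : ℕ → ℝ
  | 0 => k
  | (δ + 1) => d b k (δ + 1) / d b k δ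

/-- Average degree: `D̄(0,k) = k`, `D̄(h,k) = D(h,k)/(D(h−1,k)+1)` for `h ≥ 1`. -/
noncomputable def Dbar (b k : ℝ) : ℕ → ℝ
  | 0 => k
  | (h + 1) => D b k (h + 1) / (D b k h + 1)

/-! ### Auxiliary development -/

/-- Shifted partial sums: `E n = D n + (b - k)`, satisfying `E(n+2) = b(E(n+1) - E n)`. -/
noncomputable def Ee (b k : ℝ) (n : ℕ) : ℝ := D b k n + (b - k)

/-- Auxiliary sequence controlling the "linear part". -/
noncomputable def UU (b : ℝ) : ℕ → ℝ
  | 0 => b * (b - 2)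
  | 1 => b * (b ^ 2 - 3 * b + 1)
  | (n + 2) => b * (UU b (n + 1) - UU b n)

lemma D_succ (b k : ℝ) (n : ℕ) : D b k (n + 1) = D b k n + d b k (n + 1) := by
  simp [D, Finset.sum_range_succ]

lemma d_rec (b k : ℝ) (n : ℕ) : d b k (n + 2) = b * (d b k (n + 1) - d b k n) := by
  simp [d]

lemma D_rec (b k : ℝ) : ∀ n, D b k (n + 2) = b * D b k (n + 1) - b * D b k n + (k - b) := by
  intro n
  induction n with
  | zero =>
    simp [D, Finset.sum_range_succ, d]
    ring
  | succ n ih =>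
    have h1 := D_succ b k (n + 2)
    have h2 := D_succ b k (n + 1)
    have h3 := D_succ b k n
    have h4 := d_rec b k (n + 1)
    have h5 := d_rec b k n
    -- D(n+3) = D(n+2) + d(n+3), d(n+3) = b*(d(n+2)-d(n+1))
    -- express d's via D differences and use ih
    linear_combination h1 + h4 - b * h2 + b * h3 + ih

lemma Ee_rec (b k : ℝ) (n : ℕ) : Ee b k (n + 2) = b * (Ee b k (n + 1) - Ee b k n) := by
  have := D_rec b k n
  simp only [Ee]
  linarith [this]

lemma Ee_zero (b k : ℝ) : Ee b k 0 = b := by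
  simp [Ee, D, d]

lemma Ee_one (b k : ℝ) : Ee b k 1 = k * b := by
  simp [Ee, D, Finset.sum_range_succ, d]
  ring

lemma Ee_two (b k : ℝ) : Ee b k 2 = k * b ^ 2 - b ^ 2 := by
  have := Ee_rec b k 0
  rw [this, Ee_zero, Ee_one]; ring

lemma Ee_three (b k : ℝ) : Ee b k 3 = k * b ^ 3 - b ^ 3 - k * b ^ 2 := by
  have := Ee_rec b k 1
  rw [this, Ee_one, Ee_two]; ring

lemma casor (b k : ℝ) : ∀ n, Ee b k (n + 2) * Ee b k n - Ee b k (n + 1) ^ 2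
    = (k * b - k ^ 2 - b) * b ^ (n + 2) := by
  intro n
  induction n with
  | zero =>
    rw [Ee_zero, Ee_one, Ee_two]; ring
  | succ n ih =>
    have r1 := Ee_rec b k (n + 1)
    have r0 := Ee_rec b k n
    linear_combination b * ih + Ee b k (n + 1) * r1 - Ee b k (n + 2) * r0

lemma UU_rec (b : ℝ) (n : ℕ) : UU b (n + 2) = b * (UU b (n + 1) - UU b n) := by
  simp [UU]

lemma L_eq (b k : ℝ) : ∀ n,
    (k - b + 1) * Ee b k (n + 2) + (k - b) * Ee b k n - (2 * (k - b) + 1) * Ee b k (n + 1)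
      = -(k * b - k ^ 2 - b) * UU b n := by
  have key : ∀ n,
      ((k - b + 1) * Ee b k (n + 2) + (k - b) * Ee b k n - (2 * (k - b) + 1) * Ee b k (n + 1)
        = -(k * b - k ^ 2 - b) * UU b n) ∧
      ((k - b + 1) * Ee b k (n + 3) + (k - b) * Ee b k (n + 1) - (2 * (k - b) + 1) * Ee b k (n + 2)
        = -(k * b - k ^ 2 - b) * UU b (n + 1)) := by
    intro n
    induction n with
    | zero =>
      constructor
      · rw [Ee_zero, Ee_one, Ee_two]
        show _ = -(k * b - k ^ 2 - b) * (b * (b - 2))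
        ring
      · rw [Ee_one, Ee_two, Ee_three]
        show _ = -(k * b - k ^ 2 - b) * (b * (b ^ 2 - 3 * b + 1))
        ring
    | succ n ih =>
      refine ⟨ih.2, ?_⟩
      have r2 := Ee_rec b k (n + 2)
      have r1 := Ee_rec b k (n + 1)
      have r0 := Ee_rec b k n
      have hU := UU_rec b n
      linear_combination b * ih.2 - b * ih.1 + (k - b + 1) * r2 - (2 * (k - b) + 1) * r1
        + (k - b) * r0 + (k * b - k ^ 2 - b) * hU
  exact fun n => (key n).1

lemma Q_eq (b k : ℝ) (n : ℕ) :
    D b k (n + 2) * (D b k n + 1) - D b k (n + 1) * (D b k (n + 1) + 1)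
      = (k * b - k ^ 2 - b) * (b ^ (n + 2) - UU b n) := by
  have h1 := casor b k n
  have h2 := L_eq b k n
  simp only [Ee] at h1 h2
  linear_combination h1 + h2

section Bounds

variable {b : ℝ} (hb : b > 4)

lemma sqrt_facts (hb : b > 4) :
    ∃ s : ℝ, 0 < s ∧ s ^ 2 = b ^ 2 - 4 * b ∧ s < b - 2 ∧ b - 4 < s := by
  refine ⟨Real.sqrt (b ^ 2 - 4 * b), ?_, ?_, ?_, ?_⟩
  · exact Real.sqrt_pos.mpr (by nlinarith)
  · exact Real.sq_sqrt (by nlinarith)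
  · have h2 : Real.sqrt (b ^ 2 - 4 * b) ^ 2 = b ^ 2 - 4 * b := Real.sq_sqrt (by nlinarith)
    nlinarith [Real.sqrt_nonneg (b ^ 2 - 4 * b)]
  · have h2 : Real.sqrt (b ^ 2 - 4 * b) ^ 2 = b ^ 2 - 4 * b := Real.sq_sqrt (by nlinarith)
    nlinarith [Real.sqrt_nonneg (b ^ 2 - 4 * b)]

/-- key ratio step: if `r² = br - b`, `r, b > 0` and `r·x ≤ y` then `r·y ≤ b(y-x)`. -/
lemma ratio_step {r x y : ℝ} (hb0 : 0 < b) (hr : 0 < r) (hr2 : r ^ 2 = b * r - b)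
    (h : r * x ≤ y) : r * y ≤ b * (y - x) := by
  have e : r ^ 2 * y = (b * r - b) * y := by rw [hr2]
  have h2 : r * (r * y) ≤ r * (b * (y - x)) := by
    nlinarith [mul_le_mul_of_nonneg_left h hb0.le]
  exact le_of_mul_le_mul_left h2 hr

lemma UU_pos_ratio (hb : b > 4) : ∀ n, 0 < UU b n ∧
    (b + Real.sqrt (b ^ 2 - 4 * b)) / 2 * UU b n ≤ UU b (n + 1) := by
  obtain ⟨s, hs0, hs2, hslt, hsgt⟩ := sqrt_facts hb
  have hseq : Real.sqrt (b ^ 2 - 4 * b) = s := by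
    rw [show b ^ 2 - 4 * b = s ^ 2 by linarith [hs2], Real.sqrt_sq hs0.le]
  rw [hseq]
  set r := (b + s) / 2 with hrdef
  have hr0 : 0 < r := by rw [hrdef]; positivity
  have hr2 : r ^ 2 = b * r - b := by rw [hrdef]; field_simp; linear_combination hs2
  intro n
  induction n with
  | zero =>
    constructor
    · show (0:ℝ) < b * (b - 2); nlinarith
    · show r * (b * (b - 2)) ≤ b * (b ^ 2 - 3 * b + 1)
      rw [hrdef]
      nlinarith [sq_nonneg (s - (b - 2)), hs2]
  | succ n ih =>
    obtain ⟨hpos, hrat⟩ := ih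
    have hpos1 : 0 < UU b (n + 1) := lt_of_lt_of_le (by positivity) hrat
    refine ⟨hpos1, ?_⟩
    rw [UU_rec]
    exact ratio_step (by linarith) hr0 hr2 hrat

lemma UU_lt (hb : b > 4) : ∀ n, UU b n < b ^ (n + 2) := by
  have hb0 : (0:ℝ) < b := by linarith
  have hstep : ∀ n, UU b (n + 1) ≤ b * UU b n := by
    intro n
    induction n with
    | zero =>
      show b * (b ^ 2 - 3 * b + 1) ≤ b * (b * (b - 2))
      nlinarith
    | succ n _ =>
      rw [UU_rec]
      have hpos := (UU_pos_ratio hb n).1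
      nlinarith
  intro n
  induction n with
  | zero => show b * (b - 2) < b ^ 2; nlinarith
  | succ n ih =>
    calc UU b (n + 1) ≤ b * UU b n := hstep n
    _ < b * b ^ (n + 2) := by
        have := (UU_pos_ratio hb n).1
        nlinarith
    _ = b ^ (n + 3) := by ring

lemma Ee_ge (hb : b > 4) {k : ℝ} (hk : 2 ≤ k) : ∀ n, b ≤ Ee b k n ∧
    (b - Real.sqrt (b ^ 2 - 4 * b)) / 2 * Ee b k n ≤ Ee b k (n + 1) := by
  obtain ⟨s, hs0, hs2, hslt, hsgt⟩ := sqrt_facts hb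
  have hseq : Real.sqrt (b ^ 2 - 4 * b) = s := by
    rw [show b ^ 2 - 4 * b = s ^ 2 by linarith [hs2], Real.sqrt_sq hs0.le]
  rw [hseq]
  set r := (b - s) / 2 with hrdef
  have hr1 : 1 < r := by rw [hrdef]; linarith
  have hr2lt : r < 2 := by rw [hrdef]; linarith
  have hr2 : r ^ 2 = b * r - b := by rw [hrdef]; field_simp; linear_combination hs2
  intro n
  induction n with
  | zero =>
    rw [Ee_zero, Ee_one]
    refine ⟨le_refl b, ?_⟩
    nlinarith
  | succ n ih =>
    obtain ⟨hgeb, hrat⟩ := ih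
    have hgeb1 : b ≤ Ee b k (n + 1) := by nlinarith
    refine ⟨hgeb1, ?_⟩
    rw [Ee_rec]
    exact ratio_step (by linarith) (by linarith) hr2 hrat

lemma D_add_one_pos (hb : b > 4) {k : ℝ} (hk : 2 ≤ k) (n : ℕ) : 0 < D b k n + 1 := by
  have h := (Ee_ge hb hk n).1
  simp only [Ee] at h
  linarith

end Bounds

lemma Dbar_succ (b k : ℝ) (n : ℕ) : Dbar b k (n + 1) = D b k (n + 1) / (D b k n + 1) := rfl

lemma D_zero (b k : ℝ) : D b k 0 = k := by simp [D, d]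

lemma D_one (b k : ℝ) : D b k 1 = k + (k * b - b) := by
  simp [D, Finset.sum_range_succ, d]

theorem stmt_11 (b : ℝ) (hb : b > 4) (h : ℕ) :
    (∀ (k : ℝ), 2 ≤ k → k ≤ b - 2 → Dbar b k h < Dbar b k (h + 1)) ∧
    (∀ (k : ℝ), b - 1 ≤ k → Dbar b k (h + 1) < Dbar b k h) := by
  constructor
  · intro k hk1 hk2
    have hc : 0 < k * b - k ^ 2 - b := by
      nlinarith [mul_nonneg (by linarith : (0:ℝ) ≤ k - 2) (by linarith : (0:ℝ) ≤ b - 2 - k)]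
    cases h with
    | zero =>
      show Dbar b k 0 < Dbar b k 1
      rw [Dbar_succ, D_zero, D_one]
      show (k:ℝ) < _
      rw [lt_div_iff₀ (by linarith)]
      nlinarith
    | succ n =>
      rw [Dbar_succ, Dbar_succ]
      rw [div_lt_div_iff₀ (D_add_one_pos hb hk1 n) (D_add_one_pos hb hk1 (n + 1))]
      have hq := Q_eq b k n
      have hu := UU_lt hb n
      nlinarith [mul_pos hc (by linarith : (0:ℝ) < b ^ (n + 2) - UU b n)]
  · intro k hk1
    have hk : (2:ℝ) ≤ k := by linarith
    have hc : k * b - k ^ 2 - b < 0 := by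
      nlinarith [mul_nonneg (by linarith : (0:ℝ) ≤ k - (b - 1)) (by linarith : (0:ℝ) ≤ k - 1)]
    cases h with
    | zero =>
      show Dbar b k 1 < Dbar b k 0
      rw [Dbar_succ, D_zero, D_one]
      show _ < (k:ℝ)
      rw [div_lt_iff₀ (by linarith)]
      nlinarith
    | succ n =>
      rw [Dbar_succ, Dbar_succ]
      rw [div_lt_div_iff₀ (D_add_one_pos hb hk (n + 1)) (D_add_one_pos hb hk n)]
      have hq := Q_eq b k n
      have hu := UU_lt hb n
      nlinarith [mul_pos (by linarith : (0:ℝ) < -(k * b - k ^ 2 - b)) (by linarith : (0:ℝ) < b ^ (n + 2) - UU b n)]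
end

section
/- Let b ≥ 5 be an integer and let n be an integer with n > b³. Then D̄(⌈log_b n⌉ − 1, 2) > b − 2. (This is the lower bound on average node degree used to show that a B-slack tree with n > b³ keys occupies at most 2b(n−1)/(b−3) words.) -/
lemma d_key (b : ℝ) (hb : 5 ≤ b) :
    ∀ h : ℕ, 0 < d b 2 (h + 1) ∧ (b - 2) * d b 2 (h + 1) ≤ d b 2 (h + 2) := by
  intro h
  induction h with
  | zero =>
    refine ⟨?_, ?_⟩
    · show (0:ℝ) < 2 * b - b
      linarith
    · show (b - 2) * (2 * b - b) ≤ b * ((2 * b - b) - 2)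
      nlinarith
  | succ n ih =>
    obtain ⟨h1, h2⟩ := ih
    have h3 : 0 < d b 2 (n + 2) := lt_of_lt_of_le (by nlinarith) h2
    refine ⟨h3, ?_⟩
    show (b - 2) * d b 2 (n + 2) ≤ b * (d b 2 (n + 2) - d b 2 (n + 1))
    nlinarith

lemma d_pos (b : ℝ) (hb : 5 ≤ b) (δ : ℕ) : 0 < d b 2 δ := by
  cases δ with
  | zero => show (0:ℝ) < 2; norm_num
  | succ m => exact (d_key b hb m).1

lemma D_pos (b : ℝ) (hb : 5 ≤ b) (h : ℕ) : 0 < D b 2 h := by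
  apply Finset.sum_pos
  · intro i _
    exact d_pos b hb i
  · exact ⟨0, Finset.mem_range.mpr (Nat.succ_pos _)⟩

lemma D_key (b : ℝ) (hb : 5 ≤ b) :
    ∀ m : ℕ, (b - 2) * (D b 2 (m + 2) + 1) + (b - 2) * (b - 4) ≤ D b 2 (m + 3) := by
  intro m
  induction m with
  | zero =>
    have e3 : D b 2 3 = D b 2 2 + d b 2 3 := Finset.sum_range_succ _ 3
    have e2 : D b 2 2 = D b 2 1 + d b 2 2 := Finset.sum_range_succ _ 2
    have e1 : D b 2 1 = D b 2 0 + d b 2 1 := Finset.sum_range_succ _ 1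
    have e0 : D b 2 0 = 2 := by
      show ∑ δ ∈ Finset.range 1, d b 2 δ = 2
      simp
      rfl
    have hd0 : d b 2 0 = 2 := rfl
    have hd1 : d b 2 1 = 2 * b - b := rfl
    have hd2 : d b 2 2 = b * (d b 2 1 - d b 2 0) := rfl
    have hd3 : d b 2 3 = b * (d b 2 2 - d b 2 1) := rfl
    rw [hd0, hd1] at hd2
    rw [hd2, hd1] at hd3
    rw [e3, e2, e1, e0, hd1, hd2, hd3]
    nlinarith
  | succ n ih =>
    have step : (b - 2) * d b 2 (n + 3) ≤ d b 2 (n + 4) := (d_key b hb (n + 2)).2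
    have e4 : D b 2 (n + 4) = D b 2 (n + 3) + d b 2 (n + 4) :=
      Finset.sum_range_succ _ _
    have e3 : D b 2 (n + 3) = D b 2 (n + 2) + d b 2 (n + 3) :=
      Finset.sum_range_succ _ _
    rw [e4, e3]
    rw [e3] at ih
    linarith

theorem stmt_18 (b n : ℤ) (hb : 5 ≤ b) (hn : b ^ 3 < n) :
    Dbar (b : ℝ) 2 ((⌈Real.log (n : ℝ) / Real.log (b : ℝ)⌉ - 1).toNat) > (b : ℝ) - 2 := by
  have hb' : (5:ℝ) ≤ (b : ℝ) := by exact_mod_cast hb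
  have hbcube : ((b : ℝ)) ^ 3 < (n : ℝ) := by exact_mod_cast hn
  have hb1 : (1:ℝ) < (b : ℝ) := by linarith
  have hlogb : 0 < Real.log (b : ℝ) := Real.log_pos hb1
  have hcubepos : (0:ℝ) < (b : ℝ) ^ 3 := by positivity
  have hlog : 3 * Real.log (b : ℝ) < Real.log (n : ℝ) := by
    have h1 := Real.log_lt_log hcubepos hbcube
    rw [Real.log_pow] at h1
    push_cast at h1
    linarith
  have hdiv : (3:ℝ) < Real.log (n : ℝ) / Real.log (b : ℝ) := by
    rw [lt_div_iff₀ hlogb]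
    linarith
  have hceil : (4:ℤ) ≤ ⌈Real.log (n : ℝ) / Real.log (b : ℝ)⌉ := by
    have := Int.lt_ceil.mpr (by exact_mod_cast hdiv : ((3:ℤ):ℝ) < Real.log (n : ℝ) / Real.log (b : ℝ))
    omega
  have hN : 3 ≤ (⌈Real.log (n : ℝ) / Real.log (b : ℝ)⌉ - 1).toNat := by omega
  obtain ⟨m, hm⟩ := Nat.exists_eq_add_of_le hN
  rw [hm]
  have h3m : 3 + m = (2 + m) + 1 := by omega
  rw [h3m]
  show D (b:ℝ) 2 (2 + m + 1) / (D (b:ℝ) 2 (2 + m) + 1) > (b:ℝ) - 2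
  have hDpos : 0 < D (b:ℝ) 2 (2 + m) + 1 := by
    have := D_pos (b:ℝ) hb' (2 + m)
    linarith
  rw [gt_iff_lt, lt_div_iff₀ hDpos]
  have key := D_key (b:ℝ) hb' m
  have e1 : m + 2 = 2 + m := by omega
  have e2 : m + 3 = 2 + m + 1 := by omega
  rw [e1, e2] at key
  nlinarith
end
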